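/- arXiv:2502.19552 — 3 statements merged into one kernel-verified Lean document; each statement's English description precedes it below -/
import Mathlib

section
/- Let Φ = {f₁,…,f_k} be a contracting affine IFS on ℝ^d, let θ be a Borel probability measure on the attractor K such that θ(f_i(K) ∩ f_j(K)) = 0 for all i ≠ j, and such that θ = ∑_i p_i (f_i)_* θ for a probability vector p with all p_i > 0. Then for any Borel set B ⊆ ℝ^d, for θ-a.e. x ∈ B, writing x = cod(i₁, i₂, …) and f^{(n)} = f_{i₁}∘⋯∘f_{i_n}, we have lim_{n→∞} θ(B ∩ f^{(n)}(K)) / θ(f^{(n)}(K)) = 1. -/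
open Filter MeasureTheory

/-- `ifsComp f b n = f (b 0) ∘ f (b 1) ∘ ⋯ ∘ f (b (n-1))`. -/
def ifsComp {d k : ℕ} (f : Fin k → EuclideanSpace ℝ (Fin d) → EuclideanSpace ℝ (Fin d))
    (b : ℕ → Fin k) : ℕ → EuclideanSpace ℝ (Fin d) → EuclideanSpace ℝ (Fin d)
  | 0 => id
  | (n + 1) => fun x => ifsComp f b n (f (b n) x)

/-- The coding map of the IFS: `cod b = lim_n f_{b₀} ∘ ⋯ ∘ f_{b_{n-1}} (0)`. -/
noncomputable def ifsCod {d k : ℕ}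
    (f : Fin k → EuclideanSpace ℝ (Fin d) → EuclideanSpace ℝ (Fin d))
    (b : ℕ → Fin k) : EuclideanSpace ℝ (Fin d) :=
  limUnder atTop (fun n => ifsComp f b n 0)

/-!
Let `𝓕ₙ` be the σ-algebra generated by the cylinders `f_w(K)` over words `w` of length `n`.
Self-similarity `θ = ∑ pᵢ (fᵢ)_* θ` with all `pᵢ > 0` gives `(fᵢ)_* θ ≪ θ`, so the images
`f_w(fᵢ(K) ∩ fⱼ(K))` of the null overlaps stay null and the cylinders of each level partition `K`
up to `θ`-null sets. Hence `θ[1_{B ∩ K} | 𝓕ₙ]` is a.e. equal, on each cylinder, to the ratio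
`θ(B ∩ f_w(K)) / θ(f_w(K))`. The cylinders shrink uniformly, so the `𝓕ₙ` generate the trace of
the Borel σ-algebra on `K`, and Lévy's upward theorem gives a.e. convergence of these ratios to
`1_{B ∩ K}`, which is `1` on `B`.
-/

open Set Topology
open scoped Function

namespace MeasureTheory

section AEPartition

variable {α ι E : Type*} {m₀ : MeasurableSpace α} {μ : Measure α} {s : ι → Set α}

lemma ae_eq_of_mem_of_mem [Countable ι] (hd : Pairwise (AEDisjoint μ on s)) :
    ∀ᵐ x ∂μ, ∀ i j, x ∈ s i → x ∈ s j → i = j := by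
  have h : ∀ i j, ∀ᵐ x ∂μ, x ∈ s i → x ∈ s j → i = j := by
    intro i j
    rcases eq_or_ne i j with rfl | hij
    · exact Eventually.of_forall fun _ _ _ => rfl
    · filter_upwards [measure_eq_zero_iff_ae_notMem.1 (hd hij).eq] with x hx hi hj
      exact absurd ⟨hi, hj⟩ hx
  simpa only [ae_all_iff] using h

lemma sum_indicator_apply_of_mem [Fintype ι] [AddCommMonoid E] {x : α} {i : ι} (hi : x ∈ s i)
    (huniq : ∀ j, x ∈ s j → j = i) (g : ι → α → E) :
    ∑ j, (s j).indicator (g j) x = g i x := by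
  rw [Finset.sum_eq_single i (fun j _ hji => indicator_of_notMem (fun hj => hji (huniq j hj)) _)
    (fun h => absurd (Finset.mem_univ i) h), indicator_of_mem hi]

lemma sum_indicator_ae_eq [Fintype ι] [AddCommMonoid E] (hd : Pairwise (AEDisjoint μ on s))
    (hcover : ∀ᵐ x ∂μ, ∃ i, x ∈ s i) (g : α → E) :
    (fun x => ∑ i, (s i).indicator g x) =ᵐ[μ] g := by
  filter_upwards [ae_eq_of_mem_of_mem hd, hcover] with x huniq ⟨i, hi⟩
  exact sum_indicator_apply_of_mem hi (fun j hj => huniq j i hj hi) fun _ => g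

lemma ae_le_or_aedisjoint_of_measurableSet_generateFrom (hd : Pairwise (AEDisjoint μ on s))
    {t : Set α} (ht : MeasurableSet[MeasurableSpace.generateFrom (range s)] t) (i : ι) :
    s i ≤ᵐ[μ] t ∨ AEDisjoint μ (s i) t := by
  induction t, ht using MeasurableSpace.generateFrom_induction with
  | hC t ht =>
    obtain ⟨j, rfl⟩ := ht
    rcases eq_or_ne i j with rfl | hij
    · exact Or.inl EventuallyLE.rfl
    · exact Or.inr (hd hij)
  | empty => exact Or.inr (AEDisjoint.of_null_right measure_empty)
  | compl t _ ih =>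
    rcases ih with h | h
    · exact Or.inr (by rwa [AEDisjoint, ← sdiff_eq, ← ae_le_set])
    · exact Or.inl (by rwa [ae_le_set, sdiff_compl])
  | iUnion t _ ih =>
    by_cases h : ∃ n, s i ≤ᵐ[μ] t n
    · obtain ⟨n, hn⟩ := h
      exact Or.inl (hn.trans (Eventually.of_forall (subset_iUnion t n)))
    · rw [not_exists] at h
      exact Or.inr (AEDisjoint.iUnion_right_iff.2 fun n => (ih n).resolve_left (h n))

variable [NormedAddCommGroup E] [NormedSpace ℝ E]

lemma setIntegral_inter_eq_measureReal_smul_setAverage [IsFiniteMeasure μ]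
    (hd : Pairwise (AEDisjoint μ on s)) {t : Set α}
    (ht : MeasurableSet[MeasurableSpace.generateFrom (range s)] t) (g : α → E) (i : ι) :
    ∫ x in t ∩ s i, g x ∂μ = μ.real (t ∩ s i) • ⨍ x in s i, g x ∂μ := by
  rcases ae_le_or_aedisjoint_of_measurableSet_generateFrom hd ht i with h | h
  · have hts : (t ∩ s i : Set α) =ᵐ[μ] s i :=
      inter_subset_right.eventuallyLE.antisymm
        (h.mono fun _ hxt hxs => ⟨hxt hxs, hxs⟩)
    rw [setIntegral_congr_set hts, measureReal_congr hts,
      measure_smul_setAverage _ (measure_ne_top μ _)]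
  · have hnull : μ (t ∩ s i) = 0 := by rw [inter_comm]; exact h.eq
    rw [setIntegral_measure_zero _ hnull, measureReal_def, hnull, ENNReal.toReal_zero, zero_smul]

variable [CompleteSpace E]

lemma condExp_generateFrom_ae_eq_sum [Fintype ι] [IsFiniteMeasure μ]
    (hs : ∀ i, MeasurableSet (s i)) (hd : Pairwise (AEDisjoint μ on s))
    (hcover : ∀ᵐ x ∂μ, ∃ i, x ∈ s i) {g : α → E} (hg : Integrable g μ) :
    μ[g | MeasurableSpace.generateFrom (range s)]
      =ᵐ[μ] fun x => ∑ i, (s i).indicator (fun _ => ⨍ y in s i, g y ∂μ) x := by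
  have hm : MeasurableSpace.generateFrom (range s) ≤ m₀ :=
    MeasurableSpace.generateFrom_le (forall_mem_range.2 hs)
  have hint : ∀ i, Integrable ((s i).indicator fun _ => ⨍ y in s i, g y ∂μ) μ := fun i =>
    (integrable_const _).indicator (hs i)
  refine (ae_eq_condExp_of_forall_setIntegral_eq hm hg
    (fun _ _ _ => (integrable_finsetSum _ fun i _ => hint i).integrableOn)
    (fun t ht _ => ?_) ?_).symm
  · calc ∫ x in t, ∑ i, (s i).indicator (fun _ => ⨍ y in s i, g y ∂μ) x ∂μ
        = ∑ i, μ.real (t ∩ s i) • ⨍ y in s i, g y ∂μ := by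
          rw [integral_finsetSum _ fun i _ => (hint i).integrableOn]
          simp only [setIntegral_indicator (hs _), setIntegral_const]
      _ = ∑ i, ∫ x in t ∩ s i, g x ∂μ := by
          simp only [setIntegral_inter_eq_measureReal_smul_setAverage hd ht]
      _ = ∫ x in t, g x ∂μ := by
          rw [← integral_congr_ae (ae_restrict_of_ae (sum_indicator_ae_eq hd hcover g)),
            integral_finsetSum _ fun i _ => (hg.indicator (hs i)).integrableOn]
          simp only [setIntegral_indicator (hs _)]
  · exact (Finset.stronglyMeasurable_fun_sum _ fun i _ => stronglyMeasurable_const.indicator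
      (MeasurableSpace.measurableSet_generateFrom (mem_range_self i))).aestronglyMeasurable

lemma ae_condExp_generateFrom_eq_setAverage [Fintype ι] [IsFiniteMeasure μ]
    (hs : ∀ i, MeasurableSet (s i)) (hd : Pairwise (AEDisjoint μ on s))
    (hcover : ∀ᵐ x ∂μ, ∃ i, x ∈ s i) {g : α → E} (hg : Integrable g μ) :
    ∀ᵐ x ∂μ, ∀ i, x ∈ s i →
      μ[g | MeasurableSpace.generateFrom (range s)] x = ⨍ y in s i, g y ∂μ := by
  filter_upwards [condExp_generateFrom_ae_eq_sum hs hd hcover hg, ae_eq_of_mem_of_mem hd]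
    with x hx huniq i hi
  rw [hx, sum_indicator_apply_of_mem hi (fun j hj => huniq j i hj hi)]

end AEPartition

lemma measurableSet_inter_of_forall_isOpen {α : Type*} {m : MeasurableSpace α}
    [TopologicalSpace α] [MeasurableSpace α] [BorelSpace α] {K : Set α} (hK : MeasurableSet[m] K)
    (hopen : ∀ U, IsOpen U → MeasurableSet[m] (U ∩ K)) {S : Set α} (hS : MeasurableSet S) :
    MeasurableSet[m] (S ∩ K) := by
  induction S, hS using MeasurableSet.induction_on_open with
  | isOpen U hU => exact hopen U hU
  | compl t _ ht =>
    rw [← sdiff_eq_compl_inter, ← sdiff_inter_self_eq_sdiff]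
    exact hK.diff ht
  | iUnion t _ _ ht =>
    rw [iUnion_inter]
    exact .iUnion ht

lemma ofReal_setAverage_indicator_one {α : Type*} [MeasurableSpace α] {μ : Measure α}
    [IsFiniteMeasure μ] {s t : Set α} (ht : MeasurableSet t) :
    ENNReal.ofReal (⨍ x in s, t.indicator (fun _ => (1 : ℝ)) x ∂μ) = μ (t ∩ s) / μ s := by
  have hle : μ (t ∩ s) / μ s ≤ 1 :=
    ENNReal.div_le_of_le_mul (by rw [one_mul]; exact measure_mono inter_subset_right)
  rw [setAverage_eq, setIntegral_indicator ht, setIntegral_const, smul_eq_mul, smul_eq_mul,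
    mul_one, ← div_eq_inv_mul, measureReal_def, measureReal_def, ← ENNReal.toReal_div,
    inter_comm, ENNReal.ofReal_toReal (ne_top_of_le_ne_top ENNReal.one_ne_top hle)]

end MeasureTheory

namespace IFS

section Words

variable {α ι : Type*} {f : ι → α → α} {K : Set α}

/-- `wordComp f w = f (w 0) ∘ ⋯ ∘ f (w (n - 1))`, the finite-word version of `ifsComp`. -/
def wordComp (f : ι → α → α) : {n : ℕ} → (Fin n → ι) → α → α
  | 0, _ => id
  | _ + 1, w => wordComp f (Fin.init w) ∘ f (w (Fin.last _))

def cylinder (f : ι → α → α) (K : Set α) {n : ℕ} (w : Fin n → ι) : Set α :=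
  wordComp f w '' K

@[simp]
lemma wordComp_zero (w : Fin 0 → ι) : wordComp f w = id := rfl

lemma mapsTo_of_iUnion_image_eq (hKf : ⋃ i, f i '' K = K) (i : ι) : MapsTo (f i) K K :=
  mapsTo_iff_image_subset.2 ((subset_iUnion (fun i => f i '' K) i).trans hKf.subset)

lemma wordComp_snoc {n : ℕ} (w : Fin n → ι) (i : ι) :
    wordComp f (Fin.snoc w i : Fin (n + 1) → ι) = wordComp f w ∘ f i := by
  simp only [wordComp, Fin.init_snoc, Fin.snoc_last]

lemma wordComp_succ {n : ℕ} (w : Fin (n + 1) → ι) :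
    wordComp f w = wordComp f (Fin.init w) ∘ f (w (Fin.last n)) := rfl

lemma lipschitzWith_wordComp [PseudoEMetricSpace α] {r : NNReal}
    (hf : ∀ i, LipschitzWith r (f i)) {n : ℕ} (w : Fin n → ι) :
    LipschitzWith (r ^ n) (wordComp f w) := by
  induction n with
  | zero => simpa using LipschitzWith.id
  | succ n ih => rw [pow_succ, wordComp_succ]; exact (ih _).comp (hf _)

lemma measurableEmbedding_wordComp [MeasurableSpace α] (hf : ∀ i, MeasurableEmbedding (f i))
    {n : ℕ} (w : Fin n → ι) : MeasurableEmbedding (wordComp f w) := by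
  induction n with
  | zero => exact MeasurableEmbedding.id
  | succ n ih => exact (ih _).comp (hf _)

lemma mapsTo_wordComp (hKf : ∀ i, MapsTo (f i) K K) {n : ℕ} (w : Fin n → ι) :
    MapsTo (wordComp f w) K K := by
  induction n with
  | zero => exact mapsTo_id K
  | succ n ih => exact (ih _).comp (hKf _)

@[simp]
lemma cylinder_zero (w : Fin 0 → ι) : cylinder f K w = K := image_id K

lemma cylinder_subset_cylinder_init (hKf : ∀ i, MapsTo (f i) K K) {n : ℕ}
    (w : Fin (n + 1) → ι) : cylinder f K w ⊆ cylinder f K (Fin.init w) := by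
  rw [cylinder, wordComp_succ, image_comp]
  exact image_mono (hKf _).image_subset

lemma cylinder_subset (hKf : ∀ i, MapsTo (f i) K K) {n : ℕ} (w : Fin n → ι) :
    cylinder f K w ⊆ K :=
  (mapsTo_wordComp hKf w).image_subset

lemma cylinder_eq_iUnion_cylinder_snoc (hKf : ⋃ i, f i '' K = K) {n : ℕ}
    (w : Fin n → ι) : cylinder f K w = ⋃ i, cylinder f K (Fin.snoc w i : Fin (n + 1) → ι) := by
  simp only [cylinder, wordComp_snoc, image_comp, ← image_iUnion, hKf]

lemma subset_iUnion_cylinder (hKf : ⋃ i, f i '' K = K) (n : ℕ) :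
    K ⊆ ⋃ w : Fin n → ι, cylinder f K w := by
  induction n with
  | zero => exact fun x hx => mem_iUnion.2 ⟨Fin.elim0, by rwa [cylinder_zero]⟩
  | succ n ih =>
    intro x hx
    obtain ⟨v, hv⟩ := mem_iUnion.1 (ih hx)
    rw [cylinder_eq_iUnion_cylinder_snoc hKf] at hv
    obtain ⟨i, hi⟩ := mem_iUnion.1 hv
    exact mem_iUnion.2 ⟨_, hi⟩

lemma measurableSet_cylinder [MeasurableSpace α] (hf : ∀ i, MeasurableEmbedding (f i))
    (hK : MeasurableSet K) {n : ℕ} (w : Fin n → ι) : MeasurableSet (cylinder f K w) :=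
  (measurableEmbedding_wordComp hf w).measurableSet_image.2 hK

def cylinderFiltration [m : MeasurableSpace α] [Countable ι] (hf : ∀ i, MeasurableEmbedding (f i))
    (hK : MeasurableSet K) (hKf : ⋃ i, f i '' K = K) : Filtration ℕ m where
  seq n := MeasurableSpace.generateFrom (range (cylinder f K : (Fin n → ι) → Set α))
  mono' := monotone_nat_of_le_succ fun n => MeasurableSpace.generateFrom_le <|
    forall_mem_range.2 fun w => by
      rw [cylinder_eq_iUnion_cylinder_snoc hKf]
      exact .iUnion fun i => MeasurableSpace.measurableSet_generateFrom (mem_range_self _)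
  le' _ := MeasurableSpace.generateFrom_le (forall_mem_range.2 (measurableSet_cylinder hf hK))

lemma measurableSet_iSup_cylinderFiltration_inter [PseudoMetricSpace α] [MeasurableSpace α]
    [BorelSpace α] [Countable ι] (hf : ∀ i, MeasurableEmbedding (f i)) (hK : MeasurableSet K)
    (hKf : ⋃ i, f i '' K = K)
    (hshrink : ∀ ε > 0, ∃ n, ∀ w : Fin n → ι, ∀ z ∈ cylinder f K w, ∀ z' ∈ cylinder f K w,
      dist z z' < ε)
    {S : Set α} (hS : MeasurableSet S) :
    MeasurableSet[⨆ n, cylinderFiltration hf hK hKf n] (S ∩ K) := by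
  have hcyl : ∀ n (w : Fin n → ι),
      MeasurableSet[⨆ n, cylinderFiltration hf hK hKf n] (cylinder f K w) := fun n w =>
    le_iSup (fun n => cylinderFiltration hf hK hKf n) n _
      (MeasurableSpace.measurableSet_generateFrom (mem_range_self w))
  refine measurableSet_inter_of_forall_isOpen (by simpa using hcyl 0 Fin.elim0)
    (fun U hU => ?_) hS
  have hU_eq : U ∩ K = ⋃ n, ⋃ w : Fin n → ι, ⋃ (_ : cylinder f K w ⊆ U), cylinder f K w := by
    refine Subset.antisymm (fun x ⟨hxU, hxK⟩ => ?_) ?_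
    · obtain ⟨ε, hε, hball⟩ := Metric.isOpen_iff.1 hU x hxU
      obtain ⟨n, hn⟩ := hshrink ε hε
      obtain ⟨w, hxw⟩ := mem_iUnion.1 (subset_iUnion_cylinder hKf n hxK)
      simp only [mem_iUnion]
      exact ⟨n, w, fun z hz => hball (hn w z hz x hxw), hxw⟩
    · simp only [iUnion_subset_iff]
      exact fun n w hwU => subset_inter hwU (cylinder_subset (mapsTo_of_iUnion_image_eq hKf) w)
  rw [hU_eq]
  exact .iUnion fun n => .iUnion fun w => .iUnion fun _ => hcyl n w

section SelfSimilarMeasure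

variable [MeasurableSpace α] [Fintype ι] {μ : Measure α} {p : ι → ENNReal}

lemma measure_eq_sum_preimage (hf : ∀ i, MeasurableEmbedding (f i))
    (hμ : μ = ∑ i, p i • μ.map (f i)) (s : Set α) : μ s = ∑ i, p i * μ (f i ⁻¹' s) := by
  conv_lhs => rw [hμ]
  simp [Measure.finsetSum_apply, (hf _).map_apply]

lemma map_absolutelyContinuous (hμ : μ = ∑ i, p i • μ.map (f i)) (hp : ∀ i, p i ≠ 0) (i : ι) :
    μ.map (f i) ≪ μ :=
  (Measure.absolutelyContinuous_smul (hp i)).trans <| Measure.absolutelyContinuous_of_le <|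
    (Finset.single_le_sum (fun _ _ => Measure.zero_le _) (Finset.mem_univ i)).trans_eq
      hμ.symm

lemma measure_image_eq_zero (hf : ∀ i, MeasurableEmbedding (f i))
    (hμ : μ = ∑ i, p i • μ.map (f i)) (hp : ∀ i, p i ≠ 0) (hK : μ Kᶜ = 0)
    (hdisj : ∀ i j, i ≠ j → μ (f i '' K ∩ f j '' K) = 0)
    {N : Set α} (hNK : N ⊆ K) (hN : μ N = 0) (i : ι) : μ (f i '' N) = 0 := by
  rw [measure_eq_sum_preimage hf hμ]
  refine Finset.sum_eq_zero fun j _ => ?_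
  rcases eq_or_ne j i with rfl | hji
  · rw [(hf j).injective.preimage_image, hN, mul_zero]
  · have hoverlap : μ (f j ⁻¹' (f i '' K ∩ f j '' K)) = 0 := by
      rw [← (hf j).map_apply]
      exact map_absolutelyContinuous hμ hp j (hdisj i j hji.symm)
    have hsub : f j ⁻¹' (f i '' N) ⊆ f j ⁻¹' (f i '' K ∩ f j '' K) ∪ Kᶜ := fun x hx => by
      by_cases hxK : x ∈ K
      · exact Or.inl ⟨image_mono hNK hx, mem_image_of_mem _ hxK⟩
      · exact Or.inr hxK
    rw [measure_mono_null hsub (measure_union_null hoverlap hK), mul_zero]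

lemma measure_wordComp_image_eq_zero (hf : ∀ i, MeasurableEmbedding (f i))
    (hμ : μ = ∑ i, p i • μ.map (f i)) (hp : ∀ i, p i ≠ 0) (hK : μ Kᶜ = 0)
    (hdisj : ∀ i j, i ≠ j → μ (f i '' K ∩ f j '' K) = 0) (hKf : ∀ i, MapsTo (f i) K K)
    {n : ℕ} (w : Fin n → ι) {N : Set α} (hNK : N ⊆ K) (hN : μ N = 0) :
    μ (wordComp f w '' N) = 0 := by
  induction n generalizing N with
  | zero => simpa using hN
  | succ n ih =>
    rw [wordComp_succ, image_comp]
    exact ih _ ((hKf _).image_subset.trans' (image_mono hNK))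
      (measure_image_eq_zero hf hμ hp hK hdisj hNK hN _)

lemma aedisjoint_cylinder (hf : ∀ i, MeasurableEmbedding (f i))
    (hμ : μ = ∑ i, p i • μ.map (f i)) (hp : ∀ i, p i ≠ 0) (hK : μ Kᶜ = 0)
    (hdisj : ∀ i j, i ≠ j → μ (f i '' K ∩ f j '' K) = 0) (hKf : ∀ i, MapsTo (f i) K K)
    {n : ℕ} {w w' : Fin n → ι} (hww' : w ≠ w') :
    AEDisjoint μ (cylinder f K w) (cylinder f K w') := by
  induction n with
  | zero => exact absurd (Subsingleton.elim w w') hww'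
  | succ n ih =>
    by_cases hinit : Fin.init w = Fin.init w'
    · have hlast : w (Fin.last n) ≠ w' (Fin.last n) := fun h =>
        hww' (by rw [← Fin.snoc_init_self w, ← Fin.snoc_init_self w', hinit, h])
      rw [AEDisjoint, cylinder, cylinder, wordComp_succ, wordComp_succ, hinit, image_comp,
        image_comp, ← image_inter (measurableEmbedding_wordComp hf _).injective]
      exact measure_wordComp_image_eq_zero hf hμ hp hK hdisj hKf _
        (inter_subset_left.trans (hKf _).image_subset) (hdisj _ _ hlast)
    · exact (ih hinit).mono (cylinder_subset_cylinder_init hKf w)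
        (cylinder_subset_cylinder_init hKf w')

lemma ae_condExp_cylinderFiltration_eq_setAverage {E : Type*} [NormedAddCommGroup E]
    [NormedSpace ℝ E] [CompleteSpace E] [IsFiniteMeasure μ]
    (hf : ∀ i, MeasurableEmbedding (f i)) (hKm : MeasurableSet K) (hKf : ⋃ i, f i '' K = K)
    (hμ : μ = ∑ i, p i • μ.map (f i)) (hp : ∀ i, p i ≠ 0) (hK : μ Kᶜ = 0)
    (hdisj : ∀ i j, i ≠ j → μ (f i '' K ∩ f j '' K) = 0) {g : α → E} (hg : Integrable g μ) :
    ∀ᵐ x ∂μ, ∀ n (w : Fin n → ι), x ∈ cylinder f K w →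
      μ[g | cylinderFiltration hf hKm hKf n] x = ⨍ y in cylinder f K w, g y ∂μ := by
  refine ae_all_iff.2 fun n => ae_condExp_generateFrom_eq_setAverage
    (measurableSet_cylinder hf hKm)
    (fun w w' hww' => aedisjoint_cylinder hf hμ hp hK hdisj (mapsTo_of_iUnion_image_eq hKf) hww')
    ?_ hg
  filter_upwards [mem_ae_iff.2 hK] with x hx
  exact mem_iUnion.1 (subset_iUnion_cylinder hKf n hx)

end SelfSimilarMeasure

end Words

section Coding

variable {d k : ℕ} {f : Fin k → EuclideanSpace ℝ (Fin d) → EuclideanSpace ℝ (Fin d)}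

lemma ifsComp_eq_wordComp (b : ℕ → Fin k) (n : ℕ) :
    ifsComp f b n = wordComp f (fun j : Fin n => b j) := by
  induction n with
  | zero => rfl
  | succ n ih =>
    funext x
    exact congrFun ih (f (b n) x)

lemma ifsComp_add (b : ℕ → Fin k) (n m : ℕ) :
    ifsComp f b (n + m) = ifsComp f b n ∘ ifsComp f (fun j => b (j + n)) m := by
  induction m with
  | zero => rfl
  | succ m ih =>
    funext x
    show ifsComp f b (n + m) (f (b (n + m)) x) = _
    rw [ih, Nat.add_comm n m]
    rfl

section Contraction

variable {r : NNReal} (hr : r < 1) (hf : ∀ i, LipschitzWith r (f i))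
include hf

lemma dist_ifsComp_succ_le (b : ℕ → Fin k) (n : ℕ) :
    dist (ifsComp f b n 0) (ifsComp f b (n + 1) 0) ≤ (∑ i, ‖f i 0‖) * r ^ n := by
  have hstep : ifsComp f b (n + 1) 0 = ifsComp f b n (f (b n) 0) := rfl
  rw [hstep, ifsComp_eq_wordComp, mul_comm]
  refine ((lipschitzWith_wordComp hf _).dist_le_mul _ _).trans ?_
  rw [NNReal.coe_pow, dist_zero_left]
  gcongr
  exact Finset.single_le_sum (f := fun i => ‖f i 0‖) (fun i _ => norm_nonneg _)
    (Finset.mem_univ _)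

include hr

lemma tendsto_ifsComp_ifsCod (b : ℕ → Fin k) :
    Tendsto (fun n => ifsComp f b n 0) atTop (𝓝 (ifsCod f b)) :=
  (cauchySeq_of_le_geometric _ _ hr (dist_ifsComp_succ_le hf b)).tendsto_limUnder

lemma norm_ifsCod_le (b : ℕ → Fin k) : ‖ifsCod f b‖ ≤ (∑ i, ‖f i 0‖) / (1 - r) := by
  simpa [ifsComp] using dist_le_of_le_geometric_of_tendsto₀ _ _ hr
    (dist_ifsComp_succ_le hf b) (tendsto_ifsComp_ifsCod hr hf b)

lemma ifsCod_eq_ifsComp_ifsCod (b : ℕ → Fin k) (n : ℕ) :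
    ifsCod f b = ifsComp f b n (ifsCod f fun j => b (j + n)) := by
  have hshift : (fun m => ifsComp f b (m + n) 0)
      = fun m => ifsComp f b n (ifsComp f (fun j => b (j + n)) m 0) :=
    funext fun m => by rw [Nat.add_comm, ifsComp_add]; rfl
  have hcont : Continuous (ifsComp f b n) := by
    rw [ifsComp_eq_wordComp]
    exact (lipschitzWith_wordComp hf _).continuous
  have hlim := (tendsto_ifsComp_ifsCod hr hf b).comp (tendsto_add_atTop_nat n)
  rw [Function.comp_def, hshift] at hlim
  exact tendsto_nhds_unique hlim ((hcont.tendsto _).comp (tendsto_ifsComp_ifsCod hr hf _))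

lemma ifsCod_mem_cylinder (b : ℕ → Fin k) (n : ℕ) :
    ifsCod f b ∈ cylinder f (range (ifsCod f)) (fun j : Fin n => b j) :=
  ⟨_, mem_range_self _, by rw [← ifsComp_eq_wordComp, ← ifsCod_eq_ifsComp_ifsCod hr hf]⟩

lemma exists_forall_dist_lt_of_mem_cylinder {ε : ℝ} (hε : 0 < ε) :
    ∃ n, ∀ w : Fin n → Fin k, ∀ z ∈ cylinder f (range (ifsCod f)) w,
      ∀ z' ∈ cylinder f (range (ifsCod f)) w, dist z z' < ε := by
  set R := (∑ i, ‖f i 0‖) / (1 - r)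
  have hR : 0 ≤ R := div_nonneg (Finset.sum_nonneg fun i _ => norm_nonneg _)
    (sub_nonneg.2 (NNReal.coe_le_one.2 hr.le))
  obtain ⟨n, hn⟩ := exists_pow_lt_of_lt_one (div_pos hε (by positivity : (0 : ℝ) < 2 * R + 1))
    (NNReal.coe_lt_one.2 hr)
  refine ⟨n, fun w => ?_⟩
  rintro - ⟨-, ⟨c, rfl⟩, rfl⟩ - ⟨-, ⟨c', rfl⟩, rfl⟩
  calc dist (wordComp f w (ifsCod f c)) (wordComp f w (ifsCod f c'))
      ≤ r ^ n * (‖ifsCod f c‖ + ‖ifsCod f c'‖) := by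
        refine ((lipschitzWith_wordComp hf w).dist_le_mul _ _).trans ?_
        rw [NNReal.coe_pow]
        gcongr
        exact dist_le_norm_add_norm _ _
    _ ≤ r ^ n * (2 * R + 1) := by
        gcongr _ * ?_
        linarith [norm_ifsCod_le hr hf c, norm_ifsCod_le hr hf c']
    _ < ε := by rwa [← lt_div_iff₀ (by positivity)]

lemma continuous_ifsCod : Continuous (ifsCod f) := by
  refine continuous_iff_continuousAt.2 fun b => Metric.tendsto_nhds.2 fun ε hε => ?_
  obtain ⟨n, hn⟩ := exists_forall_dist_lt_of_mem_cylinder hr hf hε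
  have hprefix : ∀ᶠ c in 𝓝 b, (fun j : Fin n => c j) = fun j : Fin n => b j := by
    have hcont : Continuous fun c : ℕ → Fin k => fun j : Fin n => c j :=
      continuous_pi fun j => continuous_apply _
    exact hcont.continuousAt.preimage_mem_nhds (isOpen_discrete _ |>.mem_nhds (mem_singleton _))
  filter_upwards [hprefix] with c hc
  exact hn _ _ (hc ▸ ifsCod_mem_cylinder hr hf c n) _ (ifsCod_mem_cylinder hr hf b n)

lemma measurableSet_range_ifsCod : MeasurableSet (range (ifsCod f)) :=
  (isCompact_range (continuous_ifsCod hr hf)).isClosed.measurableSet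

lemma iUnion_image_range_ifsCod : ⋃ i, f i '' range (ifsCod f) = range (ifsCod f) := by
  refine Subset.antisymm (iUnion_subset fun i => ?_) fun x ⟨b, hb⟩ => ?_
  · rintro - ⟨-, ⟨b, rfl⟩, rfl⟩
    exact ⟨fun j => Nat.casesOn j i b, ifsCod_eq_ifsComp_ifsCod hr hf _ 1⟩
  · rw [← hb, ifsCod_eq_ifsComp_ifsCod hr hf b 1]
    exact mem_iUnion.2 ⟨b 0, mem_image_of_mem _ (mem_range_self _)⟩

theorem ae_tendsto_measure_inter_div (hinj : ∀ i, Function.Injective (f i))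
    {θ : Measure (EuclideanSpace ℝ (Fin d))} [IsFiniteMeasure θ] {p : Fin k → ENNReal}
    (hθ : θ = ∑ i, p i • θ.map (f i)) (hp : ∀ i, p i ≠ 0) (hK : θ (range (ifsCod f))ᶜ = 0)
    (hdisj : ∀ i j, i ≠ j → θ (f i '' range (ifsCod f) ∩ f j '' range (ifsCod f)) = 0)
    {B : Set (EuclideanSpace ℝ (Fin d))} (hB : MeasurableSet B) :
    ∀ᵐ x ∂θ, x ∈ B → ∀ b : ℕ → Fin k, ifsCod f b = x →
      Tendsto (fun n => θ (B ∩ ifsComp f b n '' range (ifsCod f))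
        / θ (ifsComp f b n '' range (ifsCod f))) atTop (𝓝 1) := by
  set K := range (ifsCod f)
  have hemb : ∀ i, MeasurableEmbedding (f i) := fun i =>
    (hf i).continuous.measurableEmbedding (hinj i)
  have hKm : MeasurableSet K := measurableSet_range_ifsCod hr hf
  have hKf : ⋃ i, f i '' K = K := iUnion_image_range_ifsCod hr hf
  set ℱ := cylinderFiltration hemb hKm hKf
  set g := (B ∩ K).indicator fun _ => (1 : ℝ)
  have hg : Integrable g θ := (integrable_const 1).indicator (hB.inter hKm)
  have hlevy := hg.tendsto_ae_condExp (ℱ := ℱ) <| stronglyMeasurable_const.indicator <|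
    measurableSet_iSup_cylinderFiltration_inter hemb hKm hKf
      (fun _ => exists_forall_dist_lt_of_mem_cylinder hr hf) hB
  filter_upwards [hlevy, ae_condExp_cylinderFiltration_eq_setAverage hemb hKm hKf hθ hp hK hdisj hg]
    with x hlim havg hxB b rfl
  have hratio : ∀ n, θ (B ∩ ifsComp f b n '' K) / θ (ifsComp f b n '' K)
      = ENNReal.ofReal (θ[g | ℱ n] (ifsCod f b)) := fun n => by
    rw [havg n _ (ifsCod_mem_cylinder hr hf b n), ofReal_setAverage_indicator_one (hB.inter hKm),
      inter_assoc, inter_eq_right.2 (cylinder_subset (mapsTo_of_iUnion_image_eq hKf) _),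
      ifsComp_eq_wordComp]
    rfl
  have hg1 : g (ifsCod f b) = 1 := indicator_of_mem (mem_inter hxB (mem_range_self b)) _
  simpa [hratio, hg1] using ENNReal.tendsto_ofReal hlim

end Contraction

end Coding

end IFS

open IFS

theorem ifs_self_similar_density_general {d k : ℕ} (ϱ : ℝ) (hϱ₀ : 0 < |ϱ|) (hϱ₁ : |ϱ| < 1)
    (y : Fin k → EuclideanSpace ℝ (Fin d))
    (f : Fin k → EuclideanSpace ℝ (Fin d) → EuclideanSpace ℝ (Fin d))
    (hf : ∀ i x, f i x = ϱ • x + y i)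
    (K : Set (EuclideanSpace ℝ (Fin d))) (hK : K = Set.range (ifsCod f))
    (θ : Measure (EuclideanSpace ℝ (Fin d))) [IsProbabilityMeasure θ]
    (hsupp : θ Kᶜ = 0)
    (p : Fin k → ENNReal) (hppos : ∀ i, 0 < p i)
    (hss : θ = ∑ i : Fin k, p i • θ.map (f i))
    (hdisj : ∀ i j : Fin k, i ≠ j → θ (f i '' K ∩ f j '' K) = 0)
    (B : Set (EuclideanSpace ℝ (Fin d))) (hB : MeasurableSet B) :
    ∀ᵐ x ∂θ, x ∈ B → ∀ b : ℕ → Fin k, ifsCod f b = x →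
      Tendsto (fun n => θ (B ∩ ifsComp f b n '' K) / θ (ifsComp f b n '' K))
        atTop (nhds 1) := by
  subst hK
  have hr : ‖ϱ‖₊ < 1 := by rwa [← NNReal.coe_lt_coe, coe_nnnorm, Real.norm_eq_abs, NNReal.coe_one]
  have hlip : ∀ i, LipschitzWith ‖ϱ‖₊ (f i) := fun i => LipschitzWith.of_dist_le_mul
    fun x x' => by rw [hf, hf, dist_add_right, dist_smul₀, coe_nnnorm]
  have hinj : ∀ i, Function.Injective (f i) := fun i x x' h =>
    smul_right_injective _ (abs_pos.1 hϱ₀) (add_right_cancel (by rwa [hf, hf] at h))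
  exact ae_tendsto_measure_inter_div hr hlip hinj hss (fun i => (hppos i).ne') hsupp hdisj hB

/-- self-similar Lebesgue density theorem.  Let `θ` be a self-similar
Borel probability measure on the attractor `K` of a contracting affine IFS, with
`θ(f i K ∩ f j K) = 0` for `i ≠ j`.  Then for any Borel set `B`, for `θ`-a.e. `x ∈ B`,
writing `x = cod b` and `f^{(n)} = f_{b₀} ∘ ⋯ ∘ f_{b_{n-1}}`, we have
`θ(B ∩ f^{(n)}(K)) / θ(f^{(n)}(K)) → 1`. -/
theorem ifs_self_similar_density {d k : ℕ} (ϱ : ℝ) (hϱ₀ : 0 < |ϱ|) (hϱ₁ : |ϱ| < 1)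
    (y : Fin k → EuclideanSpace ℝ (Fin d))
    (f : Fin k → EuclideanSpace ℝ (Fin d) → EuclideanSpace ℝ (Fin d))
    (hf : ∀ i x, f i x = ϱ • x + y i)
    (K : Set (EuclideanSpace ℝ (Fin d))) (hK : K = Set.range (ifsCod f))
    (θ : Measure (EuclideanSpace ℝ (Fin d))) [IsProbabilityMeasure θ]
    (hsupp : θ Kᶜ = 0)
    (p : Fin k → ENNReal) (hp : ∑ i, p i = 1) (hppos : ∀ i, 0 < p i)
    (hss : θ = ∑ i : Fin k, p i • θ.map (f i))
    (hdisj : ∀ i j : Fin k, i ≠ j → θ (f i '' K ∩ f j '' K) = 0)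
    (B : Set (EuclideanSpace ℝ (Fin d))) (hB : MeasurableSet B) :
    ∀ᵐ x ∂θ, x ∈ B → ∀ b : ℕ → Fin k, ifsCod f b = x →
      Tendsto (fun n => θ (B ∩ ifsComp f b n '' K) / θ (ifsComp f b n '' K))
        atTop (nhds 1) :=
  ifs_self_similar_density_general ϱ hϱ₀ hϱ₁ y f hf K hK θ hsupp p hppos hss hdisj B hB
end

section
/- Let G be a locally compact second countable group acting continuously on a locally compact second countable space X, let μ be a finitely supported probability measure on G, and let ν be an ergodic μ-stationary probability measure on X. If ν assigns full measure to a countable subset of X, then ν is supported on a finite set and gives equal mass to all elements of that set. -/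
open MeasureTheory

variable {G X : Type*}

/-- `ν` is `μ`-stationary: `μ * ν = ν`. -/
def IsStationaryMeasure [Group G] [MulAction G X] [MeasurableSpace G] [MeasurableSpace X]
    (μ : Measure G) (ν : Measure X) : Prop :=
  Measure.map (fun q : G × X => q.1 • q.2) (μ.prod ν) = ν

/-- `ν` is an ergodic `μ`-stationary probability measure (extreme point of the convex set
of stationary probability measures). -/
def IsErgodicStationaryMeasure [Group G] [MulAction G X] [MeasurableSpace G]
    [MeasurableSpace X] (μ : Measure G) (ν : Measure X) : Prop :=
  IsStationaryMeasure μ ν ∧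
    ∀ ν₁ ν₂ : Measure X, IsProbabilityMeasure ν₁ → IsProbabilityMeasure ν₂ →
      IsStationaryMeasure μ ν₁ → IsStationaryMeasure μ ν₂ →
      ∀ t : ENNReal, 0 < t → t < 1 → ν = t • ν₁ + (1 - t) • ν₂ → ν₁ = ν ∧ ν₂ = ν

/-!
Let `m` be the largest mass of an atom of `ν` (it exists: the atoms of mass at least that of a
given nonzero atom are finitely many) and `S` the finite set of atoms of mass `m`. Stationarity
writes `m = ν {x}` as the `μ`-average of `ν {g⁻¹ • x}`, so for `x ∈ S` almost every `g⁻¹` maps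
`x` into `S`; since `S` is finite, `S` is almost surely `g`-invariant. Conditioning `ν` on `S` and
on `Sᶜ` then splits `ν` into two stationary probability measures, so ergodicity forces
`ν S = 1`, and all atoms in `S` have the same mass `1 / |S|`.
-/

open ProbabilityTheory
open scoped Pointwise

theorem Set.Finite.preimage_smul_eq_self [Group G] [MulAction G X] {S : Set X} (hS : S.Finite)
    {g : G} (h : ∀ x ∈ S, g⁻¹ • x ∈ S) : (g • ·) ⁻¹' S = S := by
  rw [Set.preimage_smul]
  exact Set.eq_of_subset_of_ncard_le (Set.smul_set_subset_iff.2 h) (Set.ncard_smul_set _ _).ge hS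

section Atoms

variable [MeasurableSpace X] {ν : Measure X}

theorem Set.Countable.exists_measure_singleton_ne_zero {C : Set X} (hC : C.Countable)
    (hν : ν C ≠ 0) : ∃ x, ν {x} ≠ 0 := by
  by_contra! h
  have : NullSingletonClass ν := ⟨h⟩
  exact hν (hC.measure_zero ν)

variable [MeasurableSingletonClass X]

theorem finite_setOf_le_measure_singleton [IsFiniteMeasure ν] {ε : ENNReal} (hε : ε ≠ 0) :
    {x | ε ≤ ν {x}}.Finite := by
  by_contra hinf
  exact measure_ne_top ν _ (Set.Infinite.meas_eq_top hinf ⟨ε, hε, fun _ hx ↦ hx⟩)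

theorem exists_forall_measure_singleton_le [IsFiniteMeasure ν] {x₁ : X} (hx₁ : ν {x₁} ≠ 0) :
    ∃ x₀, ∀ y, ν {y} ≤ ν {x₀} := by
  have hfin := finite_setOf_le_measure_singleton (ν := ν) hx₁
  obtain ⟨x₀, hx₀, hmax⟩ :=
    hfin.toFinset.exists_max_image (fun x ↦ ν {x}) ⟨x₁, hfin.mem_toFinset.2 (le_refl (ν {x₁}))⟩
  refine ⟨x₀, fun y ↦ ?_⟩
  by_cases hy : ν {x₁} ≤ ν {y}
  · exact hmax y (hfin.mem_toFinset.2 hy)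
  · exact (not_le.1 hy).le.trans (hfin.mem_toFinset.1 hx₀)

theorem eq_inv_card_of_forall_measure_singleton_eq {S : Finset X} (hS : ν S = 1) {m : ENNReal}
    (hm : ∀ x ∈ S, ν {x} = m) : m = (S.card : ENNReal)⁻¹ := by
  refine ENNReal.eq_inv_of_mul_eq_one_left ?_
  rw [← hS, ← sum_measure_singleton, Finset.sum_congr rfl hm, Finset.sum_const, nsmul_eq_mul,
    mul_comm]

end Atoms

namespace IsStationaryMeasure

variable [Group G] [MulAction G X] [MeasurableSpace G] [MeasurableSpace X]
  {μ : Measure G} {ν : Measure X}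

theorem smul [SFinite ν] (h : IsStationaryMeasure μ ν) (c : ENNReal) :
    IsStationaryMeasure μ (c • ν) := by
  unfold IsStationaryMeasure at *
  rw [Measure.prod_smul_right, Measure.map_smul, h]

variable [MeasurableSMul₂ G X]

theorem _root_.MeasureTheory.Measure.map_smul_prod_apply [SFinite ν] {A : Set X}
    (hA : MeasurableSet A) :
    Measure.map (fun q : G × X ↦ q.1 • q.2) (μ.prod ν) A = ∫⁻ g, ν ((g • ·) ⁻¹' A) ∂μ := by
  rw [Measure.map_apply (f := fun q : G × X ↦ q.1 • q.2) measurable_smul hA]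
  exact Measure.prod_apply (measurable_smul hA)

theorem lintegral_measure_preimage_smul [SFinite ν] (h : IsStationaryMeasure μ ν) {A : Set X}
    (hA : MeasurableSet A) : ∫⁻ g, ν ((g • ·) ⁻¹' A) ∂μ = ν A := by
  rw [← Measure.map_smul_prod_apply hA, h]

theorem restrict [SFinite ν] (h : IsStationaryMeasure μ ν) {E : Set X} (hE : MeasurableSet E)
    (hinv : ∀ᵐ g ∂μ, (g • ·) ⁻¹' E = E) : IsStationaryMeasure μ (ν.restrict E) := by
  ext A hA
  rw [Measure.map_smul_prod_apply hA, Measure.restrict_apply hA,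
    ← h.lintegral_measure_preimage_smul (hA.inter hE)]
  refine lintegral_congr_ae ?_
  filter_upwards [hinv] with g hg
  rw [Measure.restrict_apply (measurable_const_smul g hA), Set.preimage_inter, hg]

theorem cond [IsFiniteMeasure ν] (h : IsStationaryMeasure μ ν) {E : Set X}
    (hE : MeasurableSet E) (hinv : ∀ᵐ g ∂μ, (g • ·) ⁻¹' E = E) :
    IsStationaryMeasure μ ν[|E] :=
  (h.restrict hE hinv).smul _

theorem ae_measure_singleton_inv_smul_eq [MeasurableSingletonClass X] [IsProbabilityMeasure μ]
    [IsFiniteMeasure ν] (h : IsStationaryMeasure μ ν) {x : X} (hmax : ∀ y, ν {y} ≤ ν {x}) :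
    ∀ᵐ g ∂μ, ν {g⁻¹ • x} = ν {x} := by
  have hpre : ∀ g : G, (g • ·) ⁻¹' ({x} : Set X) = {g⁻¹ • x} := fun g ↦ by
    rw [Set.preimage_smul, Set.smul_set_singleton]
  have hint : ∫⁻ g, ν {g⁻¹ • x} ∂μ = ν {x} := by
    simpa only [hpre] using h.lintegral_measure_preimage_smul (measurableSet_singleton x)
  refine ae_eq_of_ae_le_of_lintegral_le (ae_of_all _ fun g ↦ hmax _)
    (hint ▸ measure_ne_top ν _) aemeasurable_const ?_
  rw [hint, lintegral_const, measure_univ, mul_one]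

end IsStationaryMeasure

theorem IsErgodicStationaryMeasure.measure_eq_one_of_ae_preimage_smul_eq [Group G]
    [MulAction G X] [MeasurableSpace G] [MeasurableSpace X] [MeasurableSMul₂ G X]
    {μ : Measure G} {ν : Measure X}
    [IsProbabilityMeasure ν] (h : IsErgodicStationaryMeasure μ ν) {E : Set X}
    (hE : MeasurableSet E) (hinv : ∀ᵐ g ∂μ, (g • ·) ⁻¹' E = E) (hpos : ν E ≠ 0) : ν E = 1 := by
  by_contra hne
  have hlt : ν E < 1 := lt_of_le_of_ne prob_le_one hne
  have hcompl : ν Eᶜ ≠ 0 := by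
    rw [prob_compl_eq_one_sub hE]; exact (tsub_pos_of_lt hlt).ne'
  have hinvc : ∀ᵐ g ∂μ, (g • ·) ⁻¹' Eᶜ = Eᶜ := by
    filter_upwards [hinv] with g hg
    rw [Set.preimage_compl, hg]
  have hdecomp : ν = ν E • ν[|E] + (1 - ν E) • ν[|Eᶜ] := by
    ext A _
    simp only [Measure.coe_add, Measure.coe_smul, Pi.add_apply, Pi.smul_apply, smul_eq_mul]
    rw [← prob_compl_eq_one_sub hE, mul_comm, mul_comm _ (ν[A|Eᶜ]), cond_add_cond_compl_eq hE]
  have := cond_isProbabilityMeasure hpos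
  have := cond_isProbabilityMeasure hcompl
  obtain ⟨hcond, -⟩ := h.2 _ _ inferInstance inferInstance (h.1.cond hE hinv)
    (h.1.cond hE.compl hinvc) (ν E) (pos_iff_ne_zero.2 hpos) hlt hdecomp
  have hcondE := cond_apply_self hpos (measure_ne_top ν E)
  rw [hcond] at hcondE
  exact hne hcondE

theorem ergodic_stationary_countable_support_finite_general
    [Group G] [TopologicalSpace G] [MeasurableSpace G] [BorelSpace G]
    [TopologicalSpace X] [T2Space X] [SecondCountableTopology X]
    [MeasurableSpace X] [BorelSpace X]
    [MulAction G X] [ContinuousSMul G X]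
    (μ : Measure G) [IsProbabilityMeasure μ]
    (ν : Measure X) [IsProbabilityMeasure ν]
    (herg : IsErgodicStationaryMeasure μ ν)
    (hcount : ∃ C : Set X, C.Countable ∧ ν C = 1) :
    ∃ S : Finset X, S.Nonempty ∧ ν (↑S : Set X) = 1 ∧
      ∀ x ∈ S, ν {x} = ((S.card : ENNReal))⁻¹ := by
  obtain ⟨C, hC, hC1⟩ := hcount
  obtain ⟨x₁, hx₁⟩ := hC.exists_measure_singleton_ne_zero (hC1 ▸ one_ne_zero)
  obtain ⟨x₀, hmax⟩ := exists_forall_measure_singleton_le hx₁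
  have hx₀ : ν {x₀} ≠ 0 := ((pos_iff_ne_zero.2 hx₁).trans_le (hmax x₁)).ne'
  set S := {x | ν {x} = ν {x₀}}
  have hS : S.Finite := (finite_setOf_le_measure_singleton hx₀).subset fun x hx ↦ hx.ge
  have hinv : ∀ᵐ g ∂μ, (g • ·) ⁻¹' S = S := by
    have hmoved := (ae_ball_iff hS.countable).2 fun x (hx : ν {x} = ν {x₀}) ↦
      herg.1.ae_measure_singleton_inv_smul_eq fun y ↦ hx ▸ hmax y
    filter_upwards [hmoved] with g hg
    exact hS.preimage_smul_eq_self fun x hx ↦ (hg x hx).trans hx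
  have hS1 : ν S = 1 := herg.measure_eq_one_of_ae_preimage_smul_eq hS.measurableSet hinv
    fun h ↦ hx₀ (measure_mono_null (show {x₀} ⊆ S from Set.singleton_subset_iff.2 rfl) h)
  refine ⟨hS.toFinset, ⟨x₀, hS.mem_toFinset.2 rfl⟩, by rwa [hS.coe_toFinset], fun x hx ↦ ?_⟩
  rw [hS.mem_toFinset.1 hx]
  exact eq_inv_card_of_forall_measure_singleton_eq (by rwa [hS.coe_toFinset])
    fun y hy ↦ hS.mem_toFinset.1 hy

/-- An ergodic `μ`-stationary probability measure giving full measure to a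
countable set is supported on a finite set and gives equal mass `1/|S|` to each of its
elements. -/
theorem ergodic_stationary_countable_support_finite
    [Group G] [TopologicalSpace G] [IsTopologicalGroup G] [LocallyCompactSpace G]
    [SecondCountableTopology G] [MeasurableSpace G] [BorelSpace G]
    [TopologicalSpace X] [T2Space X] [LocallyCompactSpace X] [SecondCountableTopology X]
    [MeasurableSpace X] [BorelSpace X]
    [MulAction G X] [ContinuousSMul G X]
    (μ : Measure G) [IsProbabilityMeasure μ]
    (hfin : ∃ s : Finset G, μ (↑s : Set G)ᶜ = 0)
    (ν : Measure X) [IsProbabilityMeasure ν]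
    (herg : IsErgodicStationaryMeasure μ ν)
    (hcount : ∃ C : Set X, C.Countable ∧ ν C = 1) :
    ∃ S : Finset X, S.Nonempty ∧ ν (↑S : Set X) = 1 ∧
      ∀ x ∈ S, ν {x} = ((S.card : ENNReal))⁻¹ :=
  ergodic_stationary_countable_support_finite_general μ ν herg hcount
end

section
/- Let ϱ = r/q ∈ ℚ with gcd(r,q) = 1 and 0 < |ϱ| < 1, let p be a prime dividing q, and let h_i ∈ GL_{d+1}(ℚ_p) be the matrices h_i = (ϱ·Id_d, −y_i; 0, 1) for i = 1,…,k, where y_i ∈ ℚ_p^d. Suppose the affine maps f_i(x) = ϱx + y_i on ℚ_p^d leave no proper affine subspace invariant. Then any element of PGL_{d+1}(ℚ_p) commuting with all h_i is trivial. -/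
/-- Let `ϱ = r/q ∈ ℚ` in lowest terms with `0 < |ϱ| < 1`, let `p` be a
prime dividing `q`, and let `h_i = (ϱ Id_d, −y_i; 0, 1) ∈ GL_{d+1}(ℚ_p)`.  If the affine
maps `f_i(x) = ϱ x + y_i` on `ℚ_p^d` leave no nonempty proper affine subspace invariant,
then any element of `PGL_{d+1}(ℚ_p)` commuting with all the `h_i` is trivial: any
invertible matrix `g` with `g h_i g⁻¹ = h_i` modulo scalars is itself scalar. -/
theorem centralizer_trivial_in_PGL {p : ℕ} [Fact p.Prime] {d k : ℕ}
    (ϱ : ℚ) (hϱ₀ : ϱ ≠ 0) (hϱ₁ : |ϱ| < 1) (hpq : (p : ℕ) ∣ ϱ.den)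
    (y : Fin k → (Fin d → ℚ_[p]))
    (h : Fin k → Matrix (Fin d ⊕ Unit) (Fin d ⊕ Unit) ℚ_[p])
    (hh : ∀ i, h i = Matrix.fromBlocks ((ϱ : ℚ_[p]) • 1)
      (-(Matrix.of fun r (_ : Unit) => y i r)) 0 1)
    (hirr : ¬ ∃ A : AffineSubspace ℚ_[p] (Fin d → ℚ_[p]),
      (A : Set (Fin d → ℚ_[p])).Nonempty ∧ A ≠ ⊤ ∧
        ∀ i : Fin k, ∀ x ∈ A, (ϱ : ℚ_[p]) • x + y i ∈ A)
    (g : Matrix (Fin d ⊕ Unit) (Fin d ⊕ Unit) ℚ_[p]) (hg : IsUnit g)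
    (hcomm : ∀ i, ∃ c : ℚ_[p], c ≠ 0 ∧ g * h i = c • (h i * g)) :
    ∃ c : ℚ_[p], g = c • (1 : Matrix (Fin d ⊕ Unit) (Fin d ⊕ Unit) ℚ_[p]) := by
  classical
  have hϱ1 : ((ϱ : ℚ_[p])) ≠ 1 := by
    have hq : ϱ ≠ 1 := by
      intro hq; rw [hq] at hϱ₁; norm_num at hϱ₁
    exact_mod_cast hq
  have h1ϱ : (1 : ℚ_[p]) - (ϱ : ℚ_[p]) ≠ 0 := sub_ne_zero.mpr (Ne.symm hϱ1)
  rcases isEmpty_or_nonempty (Fin d) with hd | hd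
  · refine ⟨g (Sum.inr ()) (Sum.inr ()), ?_⟩
    ext a b
    cases a with
    | inl r => exact (hd.false r).elim
    | inr u =>
      cases b with
      | inl s => exact (hd.false s).elim
      | inr v => cases u; cases v; simp [Matrix.one_apply]
  · obtain ⟨r0⟩ := hd
    have hk : Nonempty (Fin k) := by
      by_contra hk
      rw [not_nonempty_iff] at hk
      refine hirr ⟨⟨{(0 : Fin d → ℚ_[p])}, ?_⟩, ⟨0, rfl⟩, ?_, ?_⟩
      · intro a p1 p2 p3 h1 h2 h3
        simp only [Set.mem_singleton_iff] at h1 h2 h3 ⊢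
        subst h1; subst h2; subst h3; simp
      · intro htop
        have h1 : (fun _ => (1:ℚ_[p])) ∈ (⊤ : AffineSubspace ℚ_[p] (Fin d → ℚ_[p])) :=
          AffineSubspace.mem_top _ _ _
        rw [← htop] at h1
        have h2 : (fun _ => (1:ℚ_[p])) = (0 : Fin d → ℚ_[p]) := h1
        have := congrFun h2 r0
        norm_num at this
      · intro i; exact (hk.false i).elim
    obtain ⟨i₀⟩ := hk
    by_cases hcrow : ∀ s, g (Sum.inr ()) (Sum.inl s) = 0
    · -- lower-left block zero
      have he0 : g (Sum.inr ()) (Sum.inr ()) ≠ 0 := by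
        obtain ⟨u, hu⟩ := hg
        have h1 : g * (↑u⁻¹ : Matrix (Fin d ⊕ Unit) (Fin d ⊕ Unit) ℚ_[p]) = 1 := by
          rw [← hu, ← Units.val_mul, mul_inv_cancel, Units.val_one]
        have h2 := congrFun (congrFun h1 (Sum.inr ())) (Sum.inr ())
        simp [Matrix.mul_apply, Fintype.sum_sum_type, Matrix.one_apply, hcrow] at h2
        intro he
        rw [he, zero_mul] at h2
        exact zero_ne_one h2
      -- key equations
      set L : (Fin d → ℚ_[p]) → Fin d → ℚ_[p] := fun x r =>
        (∑ t, g (Sum.inl r) (Sum.inl t) * x t) - g (Sum.inr ()) (Sum.inr ()) * x r with hL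
      have key2 : ∀ (i : Fin k) (r : Fin d),
          L (y i) r = (1 - (ϱ:ℚ_[p])) * g (Sum.inl r) (Sum.inr ()) := by
        intro i r
        simp only [hL]
        obtain ⟨c, hc0, heq⟩ := hcomm i
        rw [hh i] at heq
        have e4 := congrFun (congrFun heq (Sum.inr ())) (Sum.inr ())
        simp [Matrix.mul_apply, Fintype.sum_sum_type, Matrix.one_apply, hcrow] at e4
        have hc1 : c = 1 := by
          have h' : (c - 1) * g (Sum.inr ()) (Sum.inr ()) = 0 := by ring_nf; linear_combination -e4
          rcases mul_eq_zero.mp h' with h'' | h''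
          · exact sub_eq_zero.mp h''
          · exact absurd h'' he0
        have e2 := congrFun (congrFun heq (Sum.inl r)) (Sum.inr ())
        simp [Matrix.mul_apply, Fintype.sum_sum_type, Matrix.one_apply] at e2
        rw [hc1] at e2
        linear_combination -e2
      have Ladd : ∀ u v r, L (u + v) r = L u r + L v r := by
        intro u v r
        simp only [hL, Pi.add_apply, mul_add, Finset.sum_add_distrib]
        ring
      have Lsub : ∀ u v r, L (u - v) r = L u r - L v r := by
        intro u v r
        simp only [hL, Pi.sub_apply, mul_sub, Finset.sum_sub_distrib]
        ring
      have Lsmul : ∀ (a : ℚ_[p]) u r, L (a • u) r = a * L u r := by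
        intro a u r
        simp only [hL, Pi.smul_apply, smul_eq_mul, mul_sub, Finset.mul_sum]
        rw [Finset.sum_congr rfl (fun t _ => by ring : ∀ t ∈ Finset.univ,
          g (Sum.inl r) (Sum.inl t) * (a * u t) = a * (g (Sum.inl r) (Sum.inl t) * u t))]
        ring
      set F : AffineSubspace ℚ_[p] (Fin d → ℚ_[p]) :=
        ⟨{x | ∀ r, L x r = g (Sum.inl r) (Sum.inr ())}, by
          intro a p1 p2 p3 h1 h2 h3
          simp only [Set.mem_setOf_eq] at h1 h2 h3 ⊢
          intro r
          rw [vsub_eq_sub, vadd_eq_add, Ladd, Lsmul, Lsub, h1 r, h2 r, h3 r]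
          ring⟩ with hF
      have hx₁ : (((1:ℚ_[p]) - (ϱ:ℚ_[p]))⁻¹ • y i₀) ∈ F := by
        intro r
        rw [Lsmul, key2 i₀ r, inv_mul_cancel_left₀ h1ϱ]
      have hFtop : F = ⊤ := by
        by_contra hne
        refine hirr ⟨F, ⟨_, hx₁⟩, hne, ?_⟩
        intro i x hx r
        rw [Ladd, Lsmul, hx r, key2 i r]
        ring
      have hall : ∀ x r, L x r = g (Sum.inl r) (Sum.inr ()) := by
        intro x r
        have hx : x ∈ F := hFtop ▸ AffineSubspace.mem_top ℚ_[p] _ x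
        exact hx r
      have hb0 : ∀ r, g (Sum.inl r) (Sum.inr ()) = 0 := by
        intro r
        have := hall 0 r
        simp [hL] at this
        exact this.symm
      have hA : ∀ r s, g (Sum.inl r) (Sum.inl s)
          = if r = s then g (Sum.inr ()) (Sum.inr ()) else 0 := by
        intro r s
        have := hall (fun t => if t = s then 1 else 0) r
        simp only [hL, mul_ite, mul_one, mul_zero, Finset.sum_ite_eq',
          Finset.mem_univ, if_true, hb0 r] at this
        by_cases hrs : r = s
        · subst hrs
          simp at this ⊢
          linear_combination this
        · simp [hrs] at this ⊢
          exact this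
      refine ⟨g (Sum.inr ()) (Sum.inr ()), ?_⟩
      ext a b
      cases a with
      | inl r =>
        cases b with
        | inl s =>
          rw [hA r s]
          simp [Matrix.one_apply, mul_ite]
        | inr u => cases u; simp [hb0 r, Matrix.one_apply]
      | inr u =>
        cases u
        cases b with
        | inl s => simp [hcrow s, Matrix.one_apply]
        | inr v => cases v; simp [Matrix.one_apply]
    · push_neg at hcrow
      obtain ⟨s₀, hs₀⟩ := hcrow
      exfalso
      set L : (Fin d → ℚ_[p]) → ℚ_[p] := fun x =>
        ∑ t, g (Sum.inr ()) (Sum.inl t) * x t with hL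
      have key : ∀ i : Fin k,
          L (y i) = (1 - (ϱ:ℚ_[p])) * g (Sum.inr ()) (Sum.inr ()) := by
        intro i
        simp only [hL]
        obtain ⟨c, hc0, heq⟩ := hcomm i
        rw [hh i] at heq
        have e3 := congrFun (congrFun heq (Sum.inr ())) (Sum.inl s₀)
        simp [Matrix.mul_apply, Fintype.sum_sum_type, Matrix.one_apply] at e3
        have hcϱ : c = (ϱ:ℚ_[p]) := by
          have h' : (c - (ϱ:ℚ_[p])) * g (Sum.inr ()) (Sum.inl s₀) = 0 := by
            linear_combination -e3
          rcases mul_eq_zero.mp h' with h'' | h''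
          · exact sub_eq_zero.mp h''
          · exact absurd h'' hs₀
        have e4 := congrFun (congrFun heq (Sum.inr ())) (Sum.inr ())
        simp [Matrix.mul_apply, Fintype.sum_sum_type, Matrix.one_apply] at e4
        rw [hcϱ] at e4
        linear_combination -e4
      have Ladd : ∀ u v, L (u + v) = L u + L v := by
        intro u v
        simp only [hL, Pi.add_apply, mul_add, Finset.sum_add_distrib]
      have Lsub : ∀ u v, L (u - v) = L u - L v := by
        intro u v
        simp only [hL, Pi.sub_apply, mul_sub, Finset.sum_sub_distrib]
      have Lsmul : ∀ (a : ℚ_[p]) u, L (a • u) = a * L u := by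
        intro a u
        simp only [hL, Pi.smul_apply, smul_eq_mul, Finset.mul_sum]
        exact Finset.sum_congr rfl fun t _ => by ring
      refine hirr ⟨⟨{x | L x = g (Sum.inr ()) (Sum.inr ())}, ?_⟩, ?_, ?_, ?_⟩
      · intro a p1 p2 p3 h1 h2 h3
        simp only [Set.mem_setOf_eq] at h1 h2 h3 ⊢
        rw [vsub_eq_sub, vadd_eq_add, Ladd, Lsmul, Lsub, h1, h2, h3]
        ring
      · refine ⟨(fun t => if t = s₀ then
          g (Sum.inr ()) (Sum.inr ()) * (g (Sum.inr ()) (Sum.inl s₀))⁻¹ else 0), ?_⟩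
        show L _ = _
        simp only [hL, mul_ite, mul_zero, Finset.sum_ite_eq', Finset.mem_univ, if_true]
        field_simp
      · intro htop
        have m1 : (0 : Fin d → ℚ_[p]) ∈ (⊤ : AffineSubspace ℚ_[p] (Fin d → ℚ_[p])) :=
          AffineSubspace.mem_top _ _ _
        rw [← htop] at m1
        have hm1 : L 0 = g (Sum.inr ()) (Sum.inr ()) := m1
        have he0 : g (Sum.inr ()) (Sum.inr ()) = 0 := by
          simpa [hL] using hm1.symm
        have m2 : (fun t => if t = s₀ then (1:ℚ_[p]) else 0)
            ∈ (⊤ : AffineSubspace ℚ_[p] (Fin d → ℚ_[p])) := AffineSubspace.mem_top _ _ _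
        rw [← htop] at m2
        have hm2 : L (fun t => if t = s₀ then (1:ℚ_[p]) else 0)
            = g (Sum.inr ()) (Sum.inr ()) := m2
        simp only [hL, mul_ite, mul_one, mul_zero, Finset.sum_ite_eq',
          Finset.mem_univ, if_true, he0] at hm2
        exact hs₀ hm2
      · intro i x hx
        have hx' : L x = g (Sum.inr ()) (Sum.inr ()) := hx
        show L _ = _
        rw [Ladd, Lsmul, hx', key i]
        ring
end
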